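/- arXiv:2501.04565 — 2 statements merged into one kernel-verified Lean document; each statement's English description precedes it below -/
import Mathlib

section
/- Let X⋆ ∈ ℝ^{I₁×I₂×I₃} have tubal rank R with skinny t-SVD X⋆ = U⋆*Σ⋆*V⋆ᵀ. For any L_k ∈ ℝ^{I₁×R×I₃} and R_k ∈ ℝ^{I₂×R×I₃}, if dist(L_k,R_k;L⋆,R⋆) ≤ (ε/√I₃)·σ_min(X⋆) for some 0 < ε < 1, then ‖L_k*R_kᵀ − X⋆‖_F ≤ (1 + ε/2)·√2·dist(L_k,R_k;L⋆,R⋆). -/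
open scoped BigOperators
open Matrix

/-- An order-3 real tensor. -/
abbrev Tensor (I₁ I₂ I₃ : ℕ) := Fin I₁ → Fin I₂ → Fin I₃ → ℝ

namespace RTPCA

variable {I₁ I₂ I₃ J R : ℕ}

/-- The t-product, computed by circular convolution along the third mode
(equivalently, slice-wise products in the Fourier domain). -/
noncomputable def tprod (A : Tensor I₁ I₂ I₃) (B : Tensor I₂ J I₃) : Tensor I₁ J I₃ :=
  fun i j k => ∑ l : Fin I₂, ∑ t : Fin I₃, A i l t * B l j (k - t)

/-- The tensor transpose: transpose each frontal slice and reverse the order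
of the frontal slices 2 through I₃. -/
def tT (A : Tensor I₁ I₂ I₃) : Tensor I₂ I₁ I₃ :=
  fun j i k => A i j (-k)

/-- The identity tensor: first frontal slice is the identity, the rest are zero. -/
def idT (R I₃ : ℕ) : Tensor R R I₃ :=
  fun i j k => if i = j ∧ (k : ℕ) = 0 then 1 else 0

/-- Discrete Fourier transform along the third mode. -/
noncomputable def dft (A : Tensor I₁ I₂ I₃) (i : Fin I₁) (j : Fin I₂) (k : Fin I₃) : ℂ :=
  ∑ t : Fin I₃, (A i j t : ℂ) *
    Complex.exp (-(2 * Real.pi * Complex.I * (k.val : ℂ) * (t.val : ℂ)) / (I₃ : ℂ))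

/-- Fourier-domain frontal slice. -/
noncomputable def fSlice (A : Tensor I₁ I₂ I₃) (k : Fin I₃) : Matrix (Fin I₁) (Fin I₂) ℂ :=
  Matrix.of fun i j => dft A i j k

/-- Inverse DFT along the third mode (real part). -/
noncomputable def invDft (F : Fin I₁ → Fin I₂ → Fin I₃ → ℂ) : Tensor I₁ I₂ I₃ :=
  fun i j t =>
    ((∑ k : Fin I₃, F i j k *
      Complex.exp ((2 * Real.pi * Complex.I * (k.val : ℂ) * (t.val : ℂ)) / (I₃ : ℂ))) / (I₃ : ℂ)).re

/-- Squared Frobenius norm. -/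
noncomputable def fro2 (A : Tensor I₁ I₂ I₃) : ℝ := ∑ i, ∑ j, ∑ k, (A i j k) ^ 2

/-- Frobenius norm. -/
noncomputable def froNorm (A : Tensor I₁ I₂ I₃) : ℝ := Real.sqrt (fro2 A)

/-- Entrywise sup norm ‖A‖_∞. -/
noncomputable def infNorm (A : Tensor I₁ I₂ I₃) : ℝ := ⨆ i, ⨆ j, ⨆ k, |A i j k|

/-- ℓ_{2,∞} norm: largest ℓ₂ norm of a horizontal slice. -/
noncomputable def twoInfNorm (A : Tensor I₁ I₂ I₃) : ℝ :=
  ⨆ i, Real.sqrt (∑ j, ∑ k, (A i j k) ^ 2)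

/-- ℓ_{1,∞} norm: largest ℓ₁ norm of a horizontal slice. -/
noncomputable def oneInfNorm (A : Tensor I₁ I₂ I₃) : ℝ := ⨆ i, ∑ j, ∑ k, |A i j k|

/-- Spectral norm (largest singular value) of a complex matrix. -/
noncomputable def matSpecNorm {m n : ℕ} (M : Matrix (Fin m) (Fin n) ℂ) : ℝ :=
  ‖LinearMap.toContinuousLinearMap (Matrix.toEuclideanLin M)‖

/-- Tensor spectral norm = tensor operator norm: the largest singular value of
the Fourier-domain frontal slices. -/
noncomputable def specNorm (A : Tensor I₁ I₂ I₃) : ℝ :=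
  ⨆ k : Fin I₃, matSpecNorm (fSlice A k)

/-- f-diagonal in the Fourier domain with strictly positive diagonal entries. -/
def FDiagPos (S : Tensor R R I₃) : Prop :=
  (∀ k, ∀ i j : Fin R, i ≠ j → fSlice S k i j = 0) ∧
  (∀ k, ∀ i : Fin R, 0 < (fSlice S k i i).re ∧ (fSlice S k i i).im = 0)

/-- f-diagonal in the Fourier domain with nonnegative diagonal entries. -/
def FDiagNonneg (S : Tensor R R I₃) : Prop :=
  (∀ k, ∀ i j : Fin R, i ≠ j → fSlice S k i j = 0) ∧
  (∀ k, ∀ i : Fin R, 0 ≤ (fSlice S k i i).re ∧ (fSlice S k i i).im = 0)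

/-- Skinny t-SVD with tubal rank R (strictly positive Fourier-domain diagonal). -/
structure IsSkinnyTSVD (X : Tensor I₁ I₂ I₃) (U : Tensor I₁ R I₃)
    (S : Tensor R R I₃) (V : Tensor I₂ R I₃) : Prop where
  decomp : X = tprod (tprod U S) (tT V)
  orthU : tprod (tT U) U = idT R I₃
  orthV : tprod (tT V) V = idT R I₃
  diag : FDiagPos S

/-- Skinny t-SVD with tubal rank at most R (nonnegative diagonal allowed). -/
structure IsSkinnyTSVDLe (X : Tensor I₁ I₂ I₃) (U : Tensor I₁ R I₃)
    (S : Tensor R R I₃) (V : Tensor I₂ R I₃) : Prop where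
  decomp : X = tprod (tprod U S) (tT V)
  orthU : tprod (tT U) U = idT R I₃
  orthV : tprod (tT V) V = idT R I₃
  diag : FDiagNonneg S

/-- σ_min: the smallest Fourier-domain diagonal entry of Σ. -/
noncomputable def sigmaMin (S : Tensor R R I₃) : ℝ :=
  ⨅ k : Fin I₃, ⨅ i : Fin R, (fSlice S k i i).re

/-- σ_max (= σ₁): the largest Fourier-domain diagonal entry of Σ. -/
noncomputable def sigmaMax (S : Tensor R R I₃) : ℝ :=
  ⨆ k : Fin I₃, ⨆ i : Fin R, (fSlice S k i i).re

/-- Condition number κ = σ_max / σ_min. -/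
noncomputable def condNum (S : Tensor R R I₃) : ℝ := sigmaMax S / sigmaMin S

/-- Σ^{1/2}: entrywise square roots in the Fourier domain. -/
noncomputable def sqrtT (S : Tensor R R I₃) : Tensor R R I₃ :=
  invDft fun i j k => (Real.sqrt ((dft S i j k).re) : ℂ)

/-- Σ^{-1/2}: entrywise reciprocal square roots in the Fourier domain. -/
noncomputable def invSqrtT (S : Tensor R R I₃) : Tensor R R I₃ :=
  invDft fun i j k => (((Real.sqrt ((dft S i j k).re))⁻¹ : ℝ) : ℂ)

/-- `Qi` is a two-sided t-product inverse of `Q` (i.e. `Q ∈ GL(R)`). -/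
def TInv (Q Qi : Tensor R R I₃) : Prop :=
  tprod Q Qi = idT R I₃ ∧ tprod Qi Q = idT R I₃

/-- Alignment error (the quantity inside the infimum defining `distT`)
for a given invertible Q with inverse Qi. -/
noncomputable def alignErr (L Ls : Tensor I₁ R I₃) (Rt Rs : Tensor I₂ R I₃)
    (Sh : Tensor R R I₃) (Q Qi : Tensor R R I₃) : ℝ :=
  Real.sqrt ((froNorm (tprod (tprod L Q - Ls) Sh)) ^ 2 +
    (froNorm (tprod (tprod Rt (tT Qi) - Rs) Sh)) ^ 2)

/-- The distance metric dist(L,R;L⋆,R⋆): the infimum of alignment errors over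
invertible tensors Q, where `Sh` is Σ⋆^{1/2}. -/
noncomputable def distT (L Ls : Tensor I₁ R I₃) (Rt Rs : Tensor I₂ R I₃)
    (Sh : Tensor R R I₃) : ℝ :=
  sInf {d : ℝ | ∃ Q Qi : Tensor R R I₃, TInv Q Qi ∧ d = alignErr L Ls Rt Rs Sh Q Qi}

/-- Q (with inverse Qi) is an optimal alignment tensor: it attains the infimum
defining the distance metric. -/
def IsOptAlign (L Ls : Tensor I₁ R I₃) (Rt Rs : Tensor I₂ R I₃)
    (Sh : Tensor R R I₃) (Q Qi : Tensor R R I₃) : Prop :=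
  TInv Q Qi ∧ alignErr L Ls Rt Rs Sh Q Qi = distT L Ls Rt Rs Sh

/-- Entrywise soft-thresholding. -/
noncomputable def softThresh (ζ : ℝ) (A : Tensor I₁ I₂ I₃) : Tensor I₁ I₂ I₃ :=
  fun i j k => Real.sign (A i j k) * max 0 (|A i j k| - ζ)

/-- Support: the set of index triples at which the tensor is nonzero. -/
def supp (A : Tensor I₁ I₂ I₃) : Set (Fin I₁ × Fin I₂ × Fin I₃) :=
  {p | A p.1 p.2.1 p.2.2 ≠ 0}

/-- α-sparsity: every horizontal, lateral and frontal slice has at most an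
α fraction of nonzero entries. -/
def IsSparse (α : ℝ) (S : Tensor I₁ I₂ I₃) : Prop :=
  (∀ i₁ : Fin I₁, ({p : Fin I₂ × Fin I₃ | S i₁ p.1 p.2 ≠ 0}.ncard : ℝ) ≤ α * I₂ * I₃) ∧
  (∀ i₂ : Fin I₂, ({p : Fin I₁ × Fin I₃ | S p.1 i₂ p.2 ≠ 0}.ncard : ℝ) ≤ α * I₁ * I₃) ∧
  (∀ i₃ : Fin I₃, ({p : Fin I₁ × Fin I₂ | S p.1 p.2 i₃ ≠ 0}.ncard : ℝ) ≤ α * I₁ * I₂)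

/-- Tensor μ-incoherence conditions for the skinny t-SVD factors U, V. -/
def Incoherent (μ : ℝ) (U : Tensor I₁ R I₃) (V : Tensor I₂ R I₃) : Prop :=
  twoInfNorm U ≤ Real.sqrt (μ * R / I₁) ∧ twoInfNorm V ≤ Real.sqrt (μ * R / I₂)

/-- Top-R truncated t-SVD of A: a skinny t-SVD-shaped factorization which, in
every Fourier-domain frontal slice, keeps R largest singular values together
with their singular vectors (the residual is orthogonal to the kept singular
vectors and its spectral norm is at most every kept singular value). -/
structure IsTruncTSVD (A : Tensor I₁ I₂ I₃) (U : Tensor I₁ R I₃)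
    (S : Tensor R R I₃) (V : Tensor I₂ R I₃) : Prop where
  orthU : tprod (tT U) U = idT R I₃
  orthV : tprod (tT V) V = idT R I₃
  diag : FDiagNonneg S
  leftOrth : ∀ k, (fSlice U k)ᴴ * (fSlice A k - fSlice (tprod (tprod U S) (tT V)) k) = 0
  rightOrth : ∀ k, (fSlice A k - fSlice (tprod (tprod U S) (tT V)) k) * fSlice V k = 0
  topR : ∀ k, ∀ r : Fin R,
    matSpecNorm (fSlice A k - fSlice (tprod (tprod U S) (tT V)) k) ≤ (fSlice S k r r).re

end RTPCA

open RTPCA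

/-! Fix an invertible `Q` and put `ΔL = L * Q - L⋆`, `ΔR = R * Q⁻ᵀ - R⋆`, so that
`L * Rᵀ - X⋆ = ΔL * R⋆ᵀ + L⋆ * ΔRᵀ + ΔL * ΔRᵀ`. Each term is estimated slice by slice in the
Fourier domain, where the t-product becomes the matrix product and Parseval reads
`Σ_k ‖Â^{(k)}‖_F² = I₃ ‖A‖_F²`. Orthonormality of `U⋆` and `V⋆` makes the first two terms have
norms `a = ‖ΔL * Σ⋆^{1/2}‖_F` and `b = ‖ΔR * Σ⋆^{1/2}‖_F`; factoring
`ΔL̂ ΔR̂ᴴ = (ΔL̂ Σ̂^{1/2}) Σ̂⁻¹ (ΔR̂ Σ̂^{1/2})ᴴ` bounds the third by `√I₃ a b / σ_min`.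
With `m² = a² + b²` this gives `√2 m + √I₃ m² / (2 σ_min)`; the bound passes to the infimum over
`Q` by continuity, and the hypothesis on `dist` makes the quadratic term at most `(ε/2) dist`. -/

namespace Matrix

attribute [local instance] frobeniusNormedAddCommGroup

variable {l m n α : Type*} [Fintype l] [Fintype m] [Fintype n]

lemma frobenius_norm_sq [NormedAddCommGroup α] (A : Matrix m n α) :
    ‖A‖ ^ 2 = ∑ i, ∑ j, ‖A i j‖ ^ 2 := by
  change ‖WithLp.toLp 2 fun i => WithLp.toLp 2 fun j => A i j‖ ^ 2 = _
  simp [PiLp.norm_sq_eq_of_L2]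

lemma frobenius_norm_sq_eq_trace [RCLike α] (A : Matrix m n α) :
    ((‖A‖ ^ 2 : ℝ) : α) = trace (Aᴴ * A) := by
  simp only [frobenius_norm_sq, trace, diag, mul_apply, conjTranspose_apply, RCLike.star_def,
    RCLike.conj_mul, RCLike.ofReal_sum, RCLike.ofReal_pow]
  exact Finset.sum_comm

lemma frobenius_norm_mul_of_conjTranspose_mul_self [RCLike α] [DecidableEq m] {U : Matrix l m α}
    (hU : Uᴴ * U = 1) (M : Matrix m n α) : ‖U * M‖ = ‖M‖ := by
  refine (sq_eq_sq₀ (norm_nonneg _) (norm_nonneg _)).1 (RCLike.ofReal_injective (K := α) ?_)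
  rw [frobenius_norm_sq_eq_trace, frobenius_norm_sq_eq_trace, conjTranspose_mul, Matrix.mul_assoc,
    ← Matrix.mul_assoc Uᴴ, hU, Matrix.one_mul]

lemma frobenius_norm_mul_conjTranspose_of_conjTranspose_mul_self [RCLike α] [DecidableEq n]
    {V : Matrix l n α} (hV : Vᴴ * V = 1) (M : Matrix m n α) : ‖M * Vᴴ‖ = ‖M‖ := by
  rw [← frobenius_norm_conjTranspose, conjTranspose_mul, conjTranspose_conjTranspose,
    frobenius_norm_mul_of_conjTranspose_mul_self hV, frobenius_norm_conjTranspose]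

lemma frobenius_norm_mul_diagonal_le [RCLike α] [DecidableEq n] {d : n → α} {c : ℝ} (hc : 0 ≤ c)
    (hd : ∀ r, ‖d r‖ ≤ c) (A : Matrix m n α) : ‖A * diagonal d‖ ≤ c * ‖A‖ := by
  refine (pow_le_pow_iff_left₀ (norm_nonneg _) (by positivity) two_ne_zero).1 ?_
  rw [mul_pow, frobenius_norm_sq, frobenius_norm_sq, Finset.mul_sum]
  refine Finset.sum_le_sum fun i _ => ?_
  rw [Finset.mul_sum]
  refine Finset.sum_le_sum fun r _ => ?_
  rw [mul_diagonal, norm_mul, mul_pow, mul_comm]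
  gcongr
  exact hd r

end Matrix

namespace Fin

variable {n : ℕ}

lemma natCast_val_add_modEq [NeZero n] (a b : Fin n) :
    ((a + b : Fin n) : ℤ) ≡ a + b [ZMOD n] := by
  rw [Fin.val_add]; push_cast; exact Int.mod_modEq _ _

lemma natCast_val_neg_modEq [NeZero n] (a : Fin n) : ((-a : Fin n) : ℤ) ≡ -a [ZMOD n] := by
  rw [Fin.val_neg']
  push_cast [Nat.cast_sub a.isLt.le]
  exact (Int.mod_modEq _ _).trans (by simp [Int.ModEq])

end Fin

namespace RTPCA

open Complex Matrix

attribute [local instance] Matrix.frobeniusNormedAddCommGroup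

noncomputable def dftKernel (n : ℕ) (m : ℤ) : ℂ := exp (-(2 * Real.pi * I * m) / n)

section Kernel

variable {n : ℕ}

lemma dftKernel_add (a b : ℤ) : dftKernel n (a + b) = dftKernel n a * dftKernel n b := by
  rw [dftKernel, dftKernel, dftKernel, ← exp_add]; push_cast; ring_nf

lemma conj_dftKernel (m : ℤ) : starRingEnd ℂ (dftKernel n m) = dftKernel n (-m) := by
  rw [dftKernel, dftKernel, ← exp_conj]; simp [map_ofNat]

lemma dftKernel_eq_one_iff [NeZero n] (m : ℤ) : dftKernel n m = 1 ↔ (n : ℤ) ∣ m := by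
  have hζ := isPrimitiveRoot_exp n (NeZero.ne n)
  rw [← dvd_neg, ← hζ.zpow_eq_one_iff_dvd, ← exp_int_mul, dftKernel]
  push_cast; ring_nf

lemma dftKernel_congr [NeZero n] {a b : ℤ} (h : a ≡ b [ZMOD n]) :
    dftKernel n a = dftKernel n b := by
  have h1 : dftKernel n (b - a) = 1 := (dftKernel_eq_one_iff _).2 h.dvd
  rw [← mul_one (dftKernel n a), ← h1, ← dftKernel_add, add_sub_cancel]

lemma dftKernel_mul_natCast (m : ℤ) (t : ℕ) : dftKernel n (m * t) = dftKernel n m ^ t := by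
  rw [dftKernel, dftKernel, ← exp_nat_mul]; push_cast; ring_nf

lemma sum_dftKernel [NeZero n] (m : ℤ) :
    ∑ t : Fin n, dftKernel n (m * t) = if (n : ℤ) ∣ m then (n : ℂ) else 0 := by
  simp only [dftKernel_mul_natCast]
  rw [Fin.sum_univ_eq_sum_range (dftKernel n m ^ ·)]
  split_ifs with hm
  · simp [(dftKernel_eq_one_iff m).2 hm]
  · have hpow : dftKernel n m ^ n = 1 := by
      rw [← dftKernel_mul_natCast, dftKernel_eq_one_iff]; exact dvd_mul_left _ _
    rw [geom_sum_eq ((dftKernel_eq_one_iff m).not.2 hm), hpow, sub_self, zero_div]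

lemma sum_dftKernel_sub_mul [NeZero n] (t s : Fin n) :
    ∑ k : Fin n, dftKernel n (((t : ℤ) - s) * k) = if t = s then (n : ℂ) else 0 := by
  rw [sum_dftKernel]
  congr 1
  refine propext ⟨fun h => Fin.ext ?_, fun h => by simp [h]⟩
  have := Int.eq_zero_of_abs_lt_dvd h (by rw [abs_lt]; omega)
  omega

end Kernel

variable {I₁ I₂ I₃ J J₁ J₂ K₁ K₂ R : ℕ}

lemma dft_eq_sum (A : Tensor I₁ I₂ I₃) (i : Fin I₁) (j : Fin I₂) (k : Fin I₃) :
    dft A i j k = ∑ t, (A i j t : ℂ) * dftKernel I₃ (k * t) := by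
  refine Finset.sum_congr rfl fun t _ => ?_
  rw [dftKernel]; push_cast; ring_nf

lemma dftKernel_mul_val_neg [NeZero I₃] (k t : Fin I₃) :
    dftKernel I₃ (k * ((-t : Fin I₃) : ℤ)) = starRingEnd ℂ (dftKernel I₃ (k * t)) := by
  rw [conj_dftKernel, ← mul_neg]
  exact dftKernel_congr ((Fin.natCast_val_neg_modEq t).mul_left _)

lemma dftKernel_mul_val_add [NeZero I₃] (k u s : Fin I₃) :
    dftKernel I₃ (k * ((u + s : Fin I₃) : ℤ)) = dftKernel I₃ (k * u) * dftKernel I₃ (k * s) := by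
  rw [← dftKernel_add, ← mul_add]
  exact dftKernel_congr ((Fin.natCast_val_add_modEq u s).mul_left _)

lemma dft_neg [NeZero I₃] (A : Tensor I₁ I₂ I₃) (i : Fin I₁) (j : Fin I₂) (k : Fin I₃) :
    dft A i j (-k) = starRingEnd ℂ (dft A i j k) := by
  simp only [dft_eq_sum, map_sum, map_mul, conj_ofReal]
  refine Finset.sum_congr rfl fun t _ => ?_
  rw [mul_comm ((-k : Fin I₃) : ℤ), dftKernel_mul_val_neg, mul_comm (k : ℤ)]

lemma fSlice_add (A B : Tensor I₁ I₂ I₃) (k : Fin I₃) :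
    fSlice (A + B) k = fSlice A k + fSlice B k := by
  ext i j; simp [fSlice, dft, Finset.sum_add_distrib, add_mul]

lemma fSlice_sub (A B : Tensor I₁ I₂ I₃) (k : Fin I₃) :
    fSlice (A - B) k = fSlice A k - fSlice B k := by
  ext i j; simp [fSlice, dft, Finset.sum_sub_distrib, sub_mul]

lemma fSlice_tT [NeZero I₃] (A : Tensor I₁ I₂ I₃) (k : Fin I₃) :
    fSlice (tT A) k = (fSlice A k)ᴴ := by
  ext j i
  simp only [fSlice, conjTranspose_apply, of_apply, RCLike.star_def, dft_eq_sum, map_sum,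
    map_mul, conj_ofReal]
  rw [← Equiv.sum_comp (Equiv.neg (Fin I₃))]
  refine Finset.sum_congr rfl fun t _ => ?_
  rw [Equiv.neg_apply, dftKernel_mul_val_neg, tT, neg_neg]

lemma fSlice_tprod [NeZero I₃] (A : Tensor I₁ I₂ I₃) (B : Tensor I₂ J I₃) (k : Fin I₃) :
    fSlice (tprod A B) k = fSlice A k * fSlice B k := by
  ext i j
  simp only [fSlice, of_apply, mul_apply, dft_eq_sum, tprod, Complex.ofReal_sum,
    Complex.ofReal_mul, Finset.sum_mul]
  rw [Finset.sum_comm]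
  refine Finset.sum_congr rfl fun l _ => ?_
  rw [Finset.sum_comm]
  refine Finset.sum_congr rfl fun s _ => ?_
  rw [Finset.mul_sum, ← Equiv.sum_comp (Equiv.addRight s)]
  refine Finset.sum_congr rfl fun u _ => ?_
  rw [Equiv.coe_addRight, add_sub_cancel_right, dftKernel_mul_val_add]
  ring

lemma fSlice_idT [NeZero I₃] (k : Fin I₃) : fSlice (idT R I₃) k = 1 := by
  ext i j
  rw [fSlice, of_apply, dft_eq_sum, Finset.sum_eq_single 0]
  · by_cases h : i = j <;> simp [idT, h, dftKernel, one_apply]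
  · intro t _ ht
    simp [idT, Fin.val_eq_zero_iff, ht]
  · simp

lemma sum_dftKernel_mul_conj [NeZero I₃] (t s : Fin I₃) :
    ∑ k : Fin I₃, dftKernel I₃ (k * t) * starRingEnd ℂ (dftKernel I₃ (k * s))
      = if t = s then (I₃ : ℂ) else 0 := by
  rw [← sum_dftKernel_sub_mul]
  refine Finset.sum_congr rfl fun k _ => ?_
  rw [conj_dftKernel, ← dftKernel_add]; ring_nf

lemma sum_norm_dft_sq [NeZero I₃] (A : Tensor I₁ I₂ I₃) (i : Fin I₁) (j : Fin I₂) :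
    ∑ k, ‖dft A i j k‖ ^ 2 = I₃ * ∑ t, A i j t ^ 2 := by
  have h : ∑ k, ((‖dft A i j k‖ ^ 2 : ℝ) : ℂ) = I₃ * ∑ t, ((A i j t : ℂ)) ^ 2 := by
    simp only [ofReal_pow, ← mul_conj', dft_eq_sum, map_sum, map_mul, conj_ofReal,
      Finset.sum_mul_sum]
    rw [Finset.sum_comm, Finset.mul_sum]
    refine Finset.sum_congr rfl fun t _ => ?_
    rw [Finset.sum_comm]
    simp only [mul_mul_mul_comm _ (dftKernel _ _), ← Finset.mul_sum, sum_dftKernel_mul_conj]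
    simp [sq, mul_comm]
  exact_mod_cast h

lemma dft_invDft [NeZero I₃] (F : Fin I₁ → Fin I₂ → Fin I₃ → ℂ)
    (hF : ∀ i j k, F i j (-k) = starRingEnd ℂ (F i j k)) (i : Fin I₁) (j : Fin I₂) (k : Fin I₃) :
    dft (invDft F) i j k = F i j k := by
  set g : Fin I₃ → ℂ := fun t => ∑ l, F i j l * dftKernel I₃ (-(l * t))
  have hreal : ∀ t, starRingEnd ℂ (g t / I₃) = g t / I₃ := by
    intro t
    simp only [g, map_div₀, map_natCast, map_sum, map_mul, conj_dftKernel, neg_neg]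
    congr 1
    rw [← Equiv.sum_comp (Equiv.neg (Fin I₃))]
    refine Finset.sum_congr rfl fun l _ => ?_
    rw [Equiv.neg_apply, hF, ← conj_dftKernel, mul_comm ((-l : Fin I₃) : ℤ),
      dftKernel_mul_val_neg, mul_comm (t : ℤ), conj_conj]
  have hg : ∀ t, (invDft F i j t : ℂ) = g t / I₃ := by
    intro t
    rw [← conj_eq_iff_re.1 (hreal t), invDft]
    congr 3
    refine Finset.sum_congr rfl fun l _ => ?_
    rw [dftKernel]; push_cast; ring_nf
  have hterm : ∀ l t : Fin I₃, F i j l * dftKernel I₃ (-(l * t)) / I₃ * dftKernel I₃ (k * t)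
      = F i j l / I₃ * dftKernel I₃ (((k : ℤ) - l) * t) := by
    intro l t; rw [sub_mul, sub_eq_add_neg, dftKernel_add]; ring_nf
  simp only [dft_eq_sum, hg, g, Finset.sum_div, Finset.sum_mul, hterm]
  rw [Finset.sum_comm]
  simp [← Finset.mul_sum, sum_dftKernel_sub_mul, NeZero.ne]

def toEuclidean (A : Tensor I₁ I₂ I₃) : EuclideanSpace ℝ (Fin I₁ × Fin I₂ × Fin I₃) :=
  WithLp.toLp 2 fun p => A p.1 p.2.1 p.2.2

lemma froNorm_eq_norm_toEuclidean (A : Tensor I₁ I₂ I₃) : froNorm A = ‖toEuclidean A‖ := by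
  simp [EuclideanSpace.norm_eq, froNorm, fro2, toEuclidean, Fintype.sum_prod_type]

lemma froNorm_nonneg (A : Tensor I₁ I₂ I₃) : 0 ≤ froNorm A := Real.sqrt_nonneg _

lemma froNorm_add_le (A B : Tensor I₁ I₂ I₃) : froNorm (A + B) ≤ froNorm A + froNorm B := by
  simp only [froNorm_eq_norm_toEuclidean]
  exact norm_add_le (toEuclidean A) (toEuclidean B)

lemma froNorm_eq_zero {A : Tensor I₁ I₂ I₃} (h : froNorm A = 0) : A = 0 := by
  rw [froNorm_eq_norm_toEuclidean, norm_eq_zero] at h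
  funext i j k
  exact congrArg (fun v => v (i, j, k)) h

lemma sum_norm_fSlice_sq [NeZero I₃] (A : Tensor I₁ I₂ I₃) :
    ∑ k, ‖fSlice A k‖ ^ 2 = I₃ * froNorm A ^ 2 := by
  rw [froNorm, Real.sq_sqrt (by unfold fro2; positivity), fro2]
  simp only [frobenius_norm_sq, fSlice, of_apply]
  rw [Finset.sum_comm, Finset.mul_sum]
  refine Finset.sum_congr rfl fun i _ => ?_
  rw [Finset.sum_comm, Finset.mul_sum]
  exact Finset.sum_congr rfl fun j _ => sum_norm_dft_sq A i j

lemma eq_of_fSlice_eq [NeZero I₃] {A B : Tensor I₁ I₂ I₃} (h : ∀ k, fSlice A k = fSlice B k) :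
    A = B := by
  have h0 := sum_norm_fSlice_sq (A - B)
  simp only [fSlice_sub, h, sub_self, norm_zero] at h0
  exact sub_eq_zero.1 (froNorm_eq_zero (by simpa [NeZero.ne] using h0.symm))

lemma froNorm_eq_of_norm_fSlice_eq [NeZero I₃] {A : Tensor I₁ I₂ I₃} {B : Tensor J₁ J₂ I₃}
    (h : ∀ k, ‖fSlice A k‖ = ‖fSlice B k‖) : froNorm A = froNorm B := by
  have hsq := sum_norm_fSlice_sq A
  simp only [h, sum_norm_fSlice_sq B] at hsq
  exact (sq_eq_sq₀ (froNorm_nonneg _) (froNorm_nonneg _)).1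
    (mul_left_cancel₀ (Nat.cast_ne_zero.2 (NeZero.ne I₃)) hsq).symm

lemma froNorm_le_of_norm_fSlice_le [NeZero I₃] {A : Tensor I₁ I₂ I₃} {B : Tensor J₁ J₂ I₃}
    {C : Tensor K₁ K₂ I₃} {c : ℝ} (hc : 0 ≤ c)
    (h : ∀ k, ‖fSlice A k‖ ≤ c * ‖fSlice B k‖ * ‖fSlice C k‖) :
    froNorm A ≤ √I₃ * c * froNorm B * froNorm C := by
  have hI : (0 : ℝ) < I₃ := Nat.cast_pos.2 (Nat.pos_of_ne_zero (NeZero.ne I₃))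
  -- bounding one slice of `C` by the whole Parseval sum is what costs the factor `I₃`
  have hC : ∀ k, ‖fSlice C k‖ ^ 2 ≤ I₃ * froNorm C ^ 2 := fun k => by
    rw [← sum_norm_fSlice_sq]
    exact Finset.single_le_sum (f := fun k => ‖fSlice C k‖ ^ 2) (fun _ _ => by positivity)
      (Finset.mem_univ k)
  have hsq : I₃ * froNorm A ^ 2 ≤ I₃ * (√I₃ * c * froNorm B * froNorm C) ^ 2 := calc
    I₃ * froNorm A ^ 2 = ∑ k, ‖fSlice A k‖ ^ 2 := (sum_norm_fSlice_sq A).symm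
    _ ≤ ∑ k, c ^ 2 * ‖fSlice B k‖ ^ 2 * (I₃ * froNorm C ^ 2) := by
      gcongr with k
      calc ‖fSlice A k‖ ^ 2 ≤ (c * ‖fSlice B k‖ * ‖fSlice C k‖) ^ 2 := by
            gcongr; exact h k
        _ ≤ _ := by rw [mul_pow, mul_pow]; gcongr; exact hC k
    _ = I₃ * (√I₃ * c * froNorm B * froNorm C) ^ 2 := by
      rw [← Finset.sum_mul, ← Finset.mul_sum, sum_norm_fSlice_sq, mul_pow, mul_pow, mul_pow,
        Real.sq_sqrt hI.le]
      ring
  have hB := froNorm_nonneg B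
  have hC' := froNorm_nonneg C
  exact (pow_le_pow_iff_left₀ (froNorm_nonneg _) (by positivity) two_ne_zero).1
    (le_of_mul_le_mul_left hsq hI)

lemma fSlice_sqrtT [NeZero I₃] (S : Tensor R R I₃) (k : Fin I₃) :
    fSlice (sqrtT S) k = of fun i j => ((√(fSlice S k i j).re : ℝ) : ℂ) := by
  ext i j
  exact dft_invDft _ (fun i j k => by rw [dft_neg, conj_re, conj_ofReal]) i j k

lemma sigmaMin_le (S : Tensor R R I₃) (k : Fin I₃) (r : Fin R) :
    sigmaMin S ≤ (fSlice S k r r).re :=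
  (ciInf_le (Finite.bddBelow_range _) k).trans (ciInf_le (Finite.bddBelow_range _) r)

namespace FDiagPos

variable {S : Tensor R R I₃}

lemma sigmaMin_pos [NeZero I₃] [NeZero R] (hS : FDiagPos S) : 0 < sigmaMin S := by
  obtain ⟨⟨k, r⟩, hmin⟩ := Finite.exists_min fun p : Fin I₃ × Fin R => (fSlice S p.1 p.2 p.2).re
  exact (hS.2 k r).1.trans_le (le_ciInf fun k' => le_ciInf fun r' => hmin (k', r'))

lemma fSlice_eq_diagonal (hS : FDiagPos S) (k : Fin I₃) :
    fSlice S k = diagonal fun r => ((fSlice S k r r).re : ℂ) := by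
  ext i j
  by_cases h : i = j
  · subst h; simp [Complex.ext_iff, (hS.2 k i).2]
  · simp [h, hS.1 k i j h]

lemma fSlice_sqrtT_eq_diagonal [NeZero I₃] (hS : FDiagPos S) (k : Fin I₃) :
    fSlice (sqrtT S) k = diagonal fun r => ((√(fSlice S k r r).re : ℝ) : ℂ) := by
  ext i j
  by_cases h : i = j
  · subst h; simp [fSlice_sqrtT]
  · simp [fSlice_sqrtT, h, hS.1 k i j h]

lemma conjTranspose_fSlice_sqrtT [NeZero I₃] (hS : FDiagPos S) (k : Fin I₃) :
    (fSlice (sqrtT S) k)ᴴ = fSlice (sqrtT S) k := by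
  rw [hS.fSlice_sqrtT_eq_diagonal, diagonal_conjTranspose]
  congr 1
  funext r
  simp

lemma fSlice_sqrtT_mul_self [NeZero I₃] (hS : FDiagPos S) (k : Fin I₃) :
    fSlice (sqrtT S) k * fSlice (sqrtT S) k = fSlice S k := by
  rw [hS.fSlice_sqrtT_eq_diagonal, diagonal_mul_diagonal]
  conv_rhs => rw [hS.fSlice_eq_diagonal]
  congr 1
  funext r
  rw [← ofReal_mul, Real.mul_self_sqrt (hS.2 k r).1.le]

lemma fSlice_sqrtT_mul_inv_mul_sqrtT [NeZero I₃] (hS : FDiagPos S) (k : Fin I₃) :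
    fSlice (sqrtT S) k * diagonal (fun r => (((fSlice S k r r).re)⁻¹ : ℂ)) * fSlice (sqrtT S) k
      = 1 := by
  rw [hS.fSlice_sqrtT_eq_diagonal, diagonal_mul_diagonal, diagonal_mul_diagonal, ← diagonal_one]
  congr 1
  funext r
  have hσ := (hS.2 k r).1
  rw [mul_right_comm, ← ofReal_mul, Real.mul_self_sqrt hσ.le]
  exact mul_inv_cancel₀ (ofReal_ne_zero.2 hσ.ne')

end FDiagPos

lemma conjTranspose_fSlice_mul_fSlice [NeZero I₃] {U : Tensor I₁ R I₃}
    (hU : tprod (tT U) U = idT R I₃) (k : Fin I₃) : (fSlice U k)ᴴ * fSlice U k = 1 := by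
  rw [← fSlice_tT, ← fSlice_tprod, hU, fSlice_idT]

lemma TInv.fSlice_mul_fSlice [NeZero I₃] {Q Qi : Tensor R R I₃} (hQ : TInv Q Qi) (k : Fin I₃) :
    fSlice Q k * fSlice Qi k = 1 := by
  rw [← fSlice_tprod, hQ.1, fSlice_idT]

lemma tInv_idT [NeZero I₃] : TInv (idT R I₃) (idT R I₃) := by
  have h : tprod (idT R I₃) (idT R I₃) = idT R I₃ :=
    eq_of_fSlice_eq fun k => by rw [fSlice_tprod, fSlice_idT, Matrix.one_mul]
  exact ⟨h, h⟩

lemma tprod_tT_sub_tprod_tT [NeZero I₃] (A C : Tensor I₁ R I₃) (B D : Tensor I₂ R I₃) :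
    tprod A (tT B) - tprod C (tT D)
      = tprod (A - C) (tT D) + tprod C (tT (B - D)) + tprod (A - C) (tT (B - D)) :=
  eq_of_fSlice_eq fun k => by
    simp only [fSlice_sub, fSlice_add, fSlice_tprod, fSlice_tT, conjTranspose_sub,
      Matrix.sub_mul, Matrix.mul_sub]
    abel

lemma TInv.tprod_tprod_tT_tprod_tT [NeZero I₃] {Q Qi : Tensor R R I₃} (hQ : TInv Q Qi)
    (L : Tensor I₁ R I₃) (Rt : Tensor I₂ R I₃) :
    tprod (tprod L Q) (tT (tprod Rt (tT Qi))) = tprod L (tT Rt) :=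
  eq_of_fSlice_eq fun k => by
    simp only [fSlice_tprod, fSlice_tT, conjTranspose_mul, conjTranspose_conjTranspose,
      Matrix.mul_assoc]
    rw [← Matrix.mul_assoc (fSlice Q k), hQ.fSlice_mul_fSlice, Matrix.one_mul]

lemma IsSkinnyTSVD.eq_tprod_sqrtT_tT_tprod_sqrtT [NeZero I₃] {X : Tensor I₁ I₂ I₃}
    {U : Tensor I₁ R I₃} {S : Tensor R R I₃} {V : Tensor I₂ R I₃} (h : IsSkinnyTSVD X U S V) :
    X = tprod (tprod U (sqrtT S)) (tT (tprod V (sqrtT S))) :=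
  eq_of_fSlice_eq fun k => by
    simp only [h.decomp, fSlice_tprod, fSlice_tT, conjTranspose_mul,
      h.diag.conjTranspose_fSlice_sqrtT, Matrix.mul_assoc, ← h.diag.fSlice_sqrtT_mul_self]

lemma froNorm_tprod_tT_tprod_sqrtT [NeZero I₃] {S : Tensor R R I₃} (hS : FDiagPos S)
    {V : Tensor I₂ R I₃} (hV : tprod (tT V) V = idT R I₃) (A : Tensor I₁ R I₃) :
    froNorm (tprod A (tT (tprod V (sqrtT S)))) = froNorm (tprod A (sqrtT S)) :=
  froNorm_eq_of_norm_fSlice_eq fun k => by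
    rw [fSlice_tprod, fSlice_tT, fSlice_tprod, conjTranspose_mul, hS.conjTranspose_fSlice_sqrtT,
      ← Matrix.mul_assoc, frobenius_norm_mul_conjTranspose_of_conjTranspose_mul_self
        (conjTranspose_fSlice_mul_fSlice hV k), fSlice_tprod]

lemma froNorm_tprod_sqrtT_tT [NeZero I₃] {S : Tensor R R I₃} (hS : FDiagPos S)
    {U : Tensor I₁ R I₃} (hU : tprod (tT U) U = idT R I₃) (B : Tensor I₂ R I₃) :
    froNorm (tprod (tprod U (sqrtT S)) (tT B)) = froNorm (tprod B (sqrtT S)) :=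
  froNorm_eq_of_norm_fSlice_eq fun k => by
    rw [fSlice_tprod, fSlice_tprod, fSlice_tT, fSlice_tprod, Matrix.mul_assoc,
      ← hS.conjTranspose_fSlice_sqrtT, ← conjTranspose_mul,
      frobenius_norm_mul_of_conjTranspose_mul_self (conjTranspose_fSlice_mul_fSlice hU k),
      frobenius_norm_conjTranspose, hS.conjTranspose_fSlice_sqrtT]

lemma froNorm_tprod_tT_le [NeZero I₃] [NeZero R] {S : Tensor R R I₃} (hS : FDiagPos S)
    (A : Tensor I₁ R I₃) (B : Tensor I₂ R I₃) :
    froNorm (tprod A (tT B))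
      ≤ √I₃ * (sigmaMin S)⁻¹ * froNorm (tprod A (sqrtT S)) * froNorm (tprod B (sqrtT S)) := by
  have hσ := hS.sigmaMin_pos
  refine froNorm_le_of_norm_fSlice_le (inv_nonneg.2 hσ.le) fun k => ?_
  have hSh := hS.fSlice_sqrtT_mul_inv_mul_sqrtT k
  set D := diagonal fun r => (((fSlice S k r r).re)⁻¹ : ℂ)
  have hD : ∀ r, ‖((fSlice S k r r).re : ℂ)⁻¹‖ ≤ (sigmaMin S)⁻¹ := fun r => by
    rw [norm_inv, norm_real, Real.norm_of_nonneg (hS.2 k r).1.le]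
    exact inv_anti₀ hσ (sigmaMin_le S k r)
  calc ‖fSlice (tprod A (tT B)) k‖
      = ‖fSlice A k * fSlice (sqrtT S) k * D * (fSlice B k * fSlice (sqrtT S) k)ᴴ‖ := by
        rw [conjTranspose_mul, hS.conjTranspose_fSlice_sqrtT, fSlice_tprod, fSlice_tT,
          Matrix.mul_assoc (fSlice A k), Matrix.mul_assoc (fSlice A k),
          ← Matrix.mul_assoc _ _ (fSlice B k)ᴴ, hSh, Matrix.one_mul]
    _ ≤ ‖fSlice A k * fSlice (sqrtT S) k * D‖ * ‖(fSlice B k * fSlice (sqrtT S) k)ᴴ‖ :=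
        frobenius_norm_mul _ _
    _ ≤ (sigmaMin S)⁻¹ * ‖fSlice (tprod A (sqrtT S)) k‖ * ‖fSlice (tprod B (sqrtT S)) k‖ := by
        rw [frobenius_norm_conjTranspose, fSlice_tprod, fSlice_tprod]
        gcongr
        exact frobenius_norm_mul_diagonal_le (inv_nonneg.2 hσ.le) hD _

lemma distT_nonneg (L Ls : Tensor I₁ R I₃) (Rt Rs : Tensor I₂ R I₃) (Sh : Tensor R R I₃) :
    0 ≤ distT L Ls Rt Rs Sh :=
  Real.sInf_nonneg (by rintro _ ⟨Q, Qi, -, rfl⟩; exact Real.sqrt_nonneg _)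

lemma le_apply_distT_of_forall_le [NeZero I₃] {L Ls : Tensor I₁ R I₃} {Rt Rs : Tensor I₂ R I₃}
    {Sh : Tensor R R I₃} {g : ℝ → ℝ} (hg : Continuous g) {b : ℝ}
    (h : ∀ Q Qi, TInv Q Qi → b ≤ g (alignErr L Ls Rt Rs Sh Q Qi)) :
    b ≤ g (distT L Ls Rt Rs Sh) :=
  closure_minimal (by rintro _ ⟨Q, Qi, hQ, rfl⟩; exact h Q Qi hQ)
    (isClosed_le continuous_const hg)
    (csInf_mem_closure ⟨_, _, _, tInv_idT, rfl⟩
      ⟨0, by rintro _ ⟨Q, Qi, -, rfl⟩; exact Real.sqrt_nonneg _⟩)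

theorem froNorm_tprod_tT_sub_le_alignErr [NeZero I₃] [NeZero R] {Xs : Tensor I₁ I₂ I₃}
    {Us : Tensor I₁ R I₃} {Sig : Tensor R R I₃} {Vs : Tensor I₂ R I₃}
    (hsvd : IsSkinnyTSVD Xs Us Sig Vs) (Lk : Tensor I₁ R I₃) (Rk : Tensor I₂ R I₃)
    {Q Qi : Tensor R R I₃} (hQ : TInv Q Qi) :
    froNorm (tprod Lk (tT Rk) - Xs)
      ≤ √2 * alignErr Lk (tprod Us (sqrtT Sig)) Rk (tprod Vs (sqrtT Sig)) (sqrtT Sig) Q Qi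
        + √I₃ / (2 * sigmaMin Sig)
          * alignErr Lk (tprod Us (sqrtT Sig)) Rk (tprod Vs (sqrtT Sig)) (sqrtT Sig) Q Qi ^ 2 := by
  set a := froNorm (tprod (tprod Lk Q - tprod Us (sqrtT Sig)) (sqrtT Sig))
  set b := froNorm (tprod (tprod Rk (tT Qi) - tprod Vs (sqrtT Sig)) (sqrtT Sig))
  have hm : alignErr Lk (tprod Us (sqrtT Sig)) Rk (tprod Vs (sqrtT Sig)) (sqrtT Sig) Q Qi
      = √(a ^ 2 + b ^ 2) := rfl
  have hsplit : froNorm (tprod Lk (tT Rk) - Xs) ≤ a + b + √I₃ * (sigmaMin Sig)⁻¹ * a * b := by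
    rw [← hQ.tprod_tprod_tT_tprod_tT Lk Rk, hsvd.eq_tprod_sqrtT_tT_tprod_sqrtT,
      tprod_tT_sub_tprod_tT]
    refine (froNorm_add_le _ _).trans (add_le_add ((froNorm_add_le _ _).trans_eq ?_)
      (froNorm_tprod_tT_le hsvd.diag _ _))
    rw [froNorm_tprod_tT_tprod_sqrtT hsvd.diag hsvd.orthV,
      froNorm_tprod_sqrtT_tT hsvd.diag hsvd.orthU]
  have ha : 0 ≤ a := froNorm_nonneg _
  have hb : 0 ≤ b := froNorm_nonneg _
  have hσ := hsvd.diag.sigmaMin_pos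
  have hsum : a + b ≤ √2 * √(a ^ 2 + b ^ 2) := by
    rw [← Real.sqrt_mul zero_le_two, Real.le_sqrt (by positivity) (by positivity)]
    nlinarith [sq_nonneg (a - b)]
  have hprod : a * b ≤ √(a ^ 2 + b ^ 2) ^ 2 / 2 := by
    rw [Real.sq_sqrt (by positivity)]
    nlinarith [sq_nonneg (a - b)]
  have hcross : √I₃ * (sigmaMin Sig)⁻¹ * a * b
      ≤ √I₃ / (2 * sigmaMin Sig) * √(a ^ 2 + b ^ 2) ^ 2 := calc
    _ = √I₃ * (sigmaMin Sig)⁻¹ * (a * b) := by ring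
    _ ≤ √I₃ * (sigmaMin Sig)⁻¹ * (√(a ^ 2 + b ^ 2) ^ 2 / 2) := by gcongr
    _ = _ := by ring
  rw [hm]
  linarith

end RTPCA

theorem froNorm_le_dist_general
    {I₁ I₂ I₃ R : ℕ}
    (Xs : Tensor I₁ I₂ I₃) (Us : Tensor I₁ R I₃) (Sig : Tensor R R I₃) (Vs : Tensor I₂ R I₃)
    (hsvd : IsSkinnyTSVD Xs Us Sig Vs)
    (Lk : Tensor I₁ R I₃) (Rk : Tensor I₂ R I₃)
    (ε : ℝ) (hε₀ : 0 < ε)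
    (hdist : distT Lk (tprod Us (sqrtT Sig)) Rk (tprod Vs (sqrtT Sig)) (sqrtT Sig)
      ≤ ε / Real.sqrt I₃ * sigmaMin Sig) :
    froNorm (tprod Lk (tT Rk) - Xs)
      ≤ (1 + ε / 2) * Real.sqrt 2 *
        distT Lk (tprod Us (sqrtT Sig)) Rk (tprod Vs (sqrtT Sig)) (sqrtT Sig) := by
  set D := distT Lk (tprod Us (sqrtT Sig)) Rk (tprod Vs (sqrtT Sig)) (sqrtT Sig)
  have hD : 0 ≤ D := distT_nonneg _ _ _ _ _
  have hRHS : 0 ≤ (1 + ε / 2) * √2 * D := by positivity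
  rcases eq_or_ne I₃ 0 with rfl | hI₃
  · simpa [froNorm, fro2] using hRHS
  rcases eq_or_ne R 0 with rfl | hR
  · have h0 : tprod Lk (tT Rk) - Xs = 0 := by
      rw [hsvd.decomp]; funext i j k; simp [RTPCA.tprod]
    rw [h0]
    simpa [froNorm, fro2] using hRHS
  have := NeZero.mk hI₃
  have := NeZero.mk hR
  have hσ := hsvd.diag.sigmaMin_pos
  have hbound : froNorm (tprod Lk (tT Rk) - Xs) ≤ √2 * D + √I₃ / (2 * sigmaMin Sig) * D ^ 2 :=
    le_apply_distT_of_forall_le (g := fun d => √2 * d + √I₃ / (2 * sigmaMin Sig) * d ^ 2)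
      (by fun_prop) fun Q Qi hQ => froNorm_tprod_tT_sub_le_alignErr hsvd Lk Rk hQ
  have hcD : √I₃ / (2 * sigmaMin Sig) * D ≤ ε / 2 := calc
    _ ≤ √I₃ / (2 * sigmaMin Sig) * (ε / √I₃ * sigmaMin Sig) := by gcongr
    _ = ε / 2 := by field_simp
  calc froNorm (tprod Lk (tT Rk) - Xs) ≤ √2 * D + √I₃ / (2 * sigmaMin Sig) * D * D := by
        rwa [mul_assoc, ← sq]
    _ ≤ √2 * D + ε / 2 * D := by gcongr
    _ ≤ (1 + ε / 2) * √2 * D := by nlinarith [Real.one_lt_sqrt_two, mul_nonneg hε₀.le hD]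

/-- the distance metric controls the Frobenius error of the
low-rank estimate. -/
theorem froNorm_le_dist
    {I₁ I₂ I₃ R : ℕ}
    (Xs : Tensor I₁ I₂ I₃) (Us : Tensor I₁ R I₃) (Sig : Tensor R R I₃) (Vs : Tensor I₂ R I₃)
    (hsvd : IsSkinnyTSVD Xs Us Sig Vs)
    (Lk : Tensor I₁ R I₃) (Rk : Tensor I₂ R I₃)
    (ε : ℝ) (hε₀ : 0 < ε) (hε₁ : ε < 1)
    (hdist : distT Lk (tprod Us (sqrtT Sig)) Rk (tprod Vs (sqrtT Sig)) (sqrtT Sig)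
      ≤ ε / Real.sqrt I₃ * sigmaMin Sig) :
    froNorm (tprod Lk (tT Rk) - Xs)
      ≤ (1 + ε / 2) * Real.sqrt 2 *
        distT Lk (tprod Us (sqrtT Sig)) Rk (tprod Vs (sqrtT Sig)) (sqrtT Sig) :=
  froNorm_le_dist_general Xs Us Sig Vs hsvd Lk Rk ε hε₀ hdist
end

section
/- For any α-sparse tensor S ∈ ℝ^{I₁×I₂×I₃}, the tensor spectral norm satisfies ‖S‖₂ ≤ α·I₃·√(I₁I₂)·‖S‖_∞. -/
open scoped BigOperators
open Matrix

open RTPCA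

/-!
Each entry of a Fourier-domain frontal slice is bounded by the ℓ¹ norm of the corresponding tube,
since the DFT phases have modulus one. Hence, by sparsity, every row of every Fourier slice has
ℓ¹ norm at most `α I₂ I₃ ‖S‖_∞` and every column at most `α I₁ I₃ ‖S‖_∞`, and the Schur test
bounds the spectral norm of the slice by the geometric mean of these two quantities.
-/

/-- Schur test. -/
theorem Matrix.opNorm_toEuclideanLin_le_sqrt_mul {𝕜 m n : Type*} [RCLike 𝕜] [Fintype m]
    [Fintype n] [DecidableEq n] (M : Matrix m n 𝕜) {r c : ℝ} (hr : 0 ≤ r) (hc : 0 ≤ c)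
    (hrow : ∀ i, ∑ j, ‖M i j‖ ≤ r) (hcol : ∀ j, ∑ i, ‖M i j‖ ≤ c) :
    ‖LinearMap.toContinuousLinearMap (Matrix.toEuclideanLin M)‖ ≤ Real.sqrt (r * c) := by
  refine ContinuousLinearMap.opNorm_le_bound _ (Real.sqrt_nonneg _) fun x => ?_
  have hentry : ∀ i, ‖(M *ᵥ x.ofLp) i‖ ≤ ∑ j, ‖M i j‖ * ‖x j‖ := fun i =>
    (norm_sum_le _ _).trans_eq (by simp only [norm_mul])
  have hsq : ‖Matrix.toEuclideanLin M x‖ ^ 2 ≤ r * c * ‖x‖ ^ 2 := calc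
    ‖Matrix.toEuclideanLin M x‖ ^ 2 = ∑ i, ‖(M *ᵥ x.ofLp) i‖ ^ 2 := by
      rw [EuclideanSpace.norm_sq_eq]; rfl
    _ ≤ ∑ i, (∑ j, ‖M i j‖ * ‖x j‖) ^ 2 := by gcongr with i; exact hentry i
    -- Cauchy–Schwarz with weights ‖M i j‖
    _ ≤ ∑ i, r * ∑ j, ‖M i j‖ * ‖x j‖ ^ 2 := by
      gcongr with i
      refine (Finset.sum_sq_le_sum_mul_sum_of_sq_le_mul _ (f := fun j => ‖M i j‖)
        (g := fun j => ‖M i j‖ * ‖x j‖ ^ 2) (fun j _ => norm_nonneg _)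
        (fun j _ => by positivity) fun j _ => le_of_eq (by ring)).trans ?_
      gcongr
      exact hrow i
    _ = r * ∑ j, (∑ i, ‖M i j‖) * ‖x j‖ ^ 2 := by
      simp only [← Finset.mul_sum, Finset.sum_mul]
      rw [Finset.sum_comm]
    _ ≤ r * ∑ j, c * ‖x j‖ ^ 2 := by gcongr with j; exact hcol j
    _ = r * c * ‖x‖ ^ 2 := by rw [EuclideanSpace.norm_sq_eq, ← Finset.mul_sum, mul_assoc]
  rw [← pow_le_pow_iff_left₀ (norm_nonneg _) (by positivity) two_ne_zero, mul_pow,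
    Real.sq_sqrt (mul_nonneg hr hc)]
  exact hsq

theorem Fintype.sum_norm_le_ncard_support_mul {ι E : Type*} [Fintype ι] [NormedAddCommGroup E]
    (f : ι → E) {B : ℝ} (hB : ∀ p, ‖f p‖ ≤ B) :
    ∑ p, ‖f p‖ ≤ (Function.support f).ncard * B := by
  classical
  calc ∑ p, ‖f p‖ = ∑ p with f p ≠ 0, ‖f p‖ :=
        (Finset.sum_filter_of_ne fun p _ hp => norm_ne_zero_iff.mp hp).symm
    _ ≤ (Finset.univ.filter (f · ≠ 0)).card • B := Finset.sum_le_card_nsmul _ _ _ fun p _ => hB p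
    _ = (Function.support f).ncard * B := by
      rw [nsmul_eq_mul, ← Set.ncard_coe_finset, Finset.coe_filter_univ, Function.support]

namespace RTPCA

variable {I₁ I₂ I₃ : ℕ}

theorem infNorm_nonneg (A : Tensor I₁ I₂ I₃) : 0 ≤ infNorm A :=
  Real.iSup_nonneg fun _ => Real.iSup_nonneg fun _ => Real.iSup_nonneg fun _ => abs_nonneg _

theorem abs_le_infNorm (A : Tensor I₁ I₂ I₃) (i j k) : |A i j k| ≤ infNorm A :=
  ((Finite.le_ciSup _ k).trans (Finite.le_ciSup (fun j => ⨆ k, |A i j k|) j)).trans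
    (Finite.le_ciSup (fun i => ⨆ j, ⨆ k, |A i j k|) i)

theorem norm_dft_le (A : Tensor I₁ I₂ I₃) (i j k) : ‖dft A i j k‖ ≤ ∑ t, |A i j t| := by
  refine (norm_sum_le _ _).trans_eq (Finset.sum_congr rfl fun t _ => ?_)
  have hphase : -(2 * Real.pi * Complex.I * (k.val : ℂ) * (t.val : ℂ)) / (I₃ : ℂ)
      = ((-(2 * Real.pi * k.val * t.val) / I₃ : ℝ) : ℂ) * Complex.I := by
    push_cast; ring
  rw [norm_mul, hphase, Complex.norm_exp_ofReal_mul_I, mul_one, Complex.norm_real,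
    Real.norm_eq_abs]

theorem specNorm_eq_zero_of_eq_zero (A : Tensor I₁ I₂ I₃) (h : I₁ = 0 ∨ I₂ = 0 ∨ I₃ = 0) :
    specNorm A = 0 := by
  rcases h with rfl | rfl | rfl
  all_goals first
    | exact Real.iSup_of_isEmpty _
    | simp only [specNorm, Subsingleton.elim (fSlice A _) 0, matSpecNorm, map_zero,
        norm_zero, Real.iSup_const_zero]

theorem IsSparse.nonneg {α : ℝ} {S : Tensor I₁ I₂ I₃} (hS : IsSparse α S) (i : Fin I₁)
    (hI₂ : I₂ ≠ 0) (hI₃ : I₃ ≠ 0) : 0 ≤ α :=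
  nonneg_of_mul_nonneg_left ((Nat.cast_nonneg _).trans (mul_assoc α _ _ ▸ hS.1 i))
    (by positivity)

theorem IsSparse.sum_abs_horizontal_le {α : ℝ} {S : Tensor I₁ I₂ I₃} (hS : IsSparse α S)
    (i : Fin I₁) : ∑ j, ∑ t, |S i j t| ≤ α * I₂ * I₃ * infNorm S := by
  rw [← Fintype.sum_prod_type']
  simpa only [Real.norm_eq_abs] using
    (Fintype.sum_norm_le_ncard_support_mul (fun p : Fin I₂ × Fin I₃ => S i p.1 p.2)
      fun p => abs_le_infNorm S _ _ _).trans
    (mul_le_mul_of_nonneg_right (hS.1 i) (infNorm_nonneg S))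

theorem IsSparse.sum_abs_lateral_le {α : ℝ} {S : Tensor I₁ I₂ I₃} (hS : IsSparse α S)
    (j : Fin I₂) : ∑ i, ∑ t, |S i j t| ≤ α * I₁ * I₃ * infNorm S := by
  rw [← Fintype.sum_prod_type']
  simpa only [Real.norm_eq_abs] using
    (Fintype.sum_norm_le_ncard_support_mul (fun p : Fin I₁ × Fin I₃ => S p.1 j p.2)
      fun p => abs_le_infNorm S _ _ _).trans
    (mul_le_mul_of_nonneg_right (hS.2.1 j) (infNorm_nonneg S))

end RTPCA

/-- spectral norm bound for α-sparse tensors. -/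
theorem specNorm_le_of_sparse
    {I₁ I₂ I₃ : ℕ} (α : ℝ) (S : Tensor I₁ I₂ I₃)
    (hS : IsSparse α S) :
    specNorm S ≤ α * I₃ * Real.sqrt ((I₁ : ℝ) * I₂) * infNorm S := by
  by_cases hdeg : I₁ = 0 ∨ I₂ = 0 ∨ I₃ = 0
  · rw [specNorm_eq_zero_of_eq_zero S hdeg]
    rcases hdeg with h | h | h <;> simp [h]
  simp only [not_or] at hdeg
  obtain ⟨hI₁, hI₂, hI₃⟩ := hdeg
  have hα := hS.nonneg ⟨0, Nat.pos_of_ne_zero hI₁⟩ hI₂ hI₃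
  have hB := infNorm_nonneg S
  have : NeZero I₃ := ⟨hI₃⟩
  refine ciSup_le fun k => ?_
  calc matSpecNorm (fSlice S k)
      ≤ Real.sqrt ((α * I₂ * I₃ * infNorm S) * (α * I₁ * I₃ * infNorm S)) :=
        Matrix.opNorm_toEuclideanLin_le_sqrt_mul _ (by positivity) (by positivity)
          (fun i => (Finset.sum_le_sum fun j _ => norm_dft_le S i j k).trans
            (hS.sum_abs_horizontal_le i))
          (fun j => (Finset.sum_le_sum fun i _ => norm_dft_le S i j k).trans
            (hS.sum_abs_lateral_le j))
    _ = α * I₃ * Real.sqrt ((I₁ : ℝ) * I₂) * infNorm S := by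
        rw [show (α * I₂ * I₃ * infNorm S) * (α * I₁ * I₃ * infNorm S)
            = (α * I₃ * infNorm S) ^ 2 * ((I₁ : ℝ) * I₂) by ring,
          Real.sqrt_mul (sq_nonneg _), Real.sqrt_sq (by positivity)]
        ring
end
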